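/- Let R be a standard graded ring of dimension d ≥ 2 over a field of characteristic p > 0, I a homogeneous ideal of finite colength, and M a finitely generated non-negatively graded R-module. For each n, define g_n: ℝ → ℝ as the piecewise linear interpolation of the values g_n(m/q) = (1/q^{d-1})·ℓ(M/I^{[q]}M)_m for integers m (q = p^n), and g_n(x) = 0 for x < 0. Then each g_n is a continuous function with compact support, and there is a single compact interval [0, C] containing the supports of all g_n. -/

import Mathlib

/-!
On each interval `[c, c + 1]` the interpolation through integer nodes is affine, and these
closed intervals cover `ℝ` locally finitely, so every `g_n` is continuous.

For the supports, let `𝔪` be the irrelevant ideal and `q = p ^ n`. A standard graded ring has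
`R_a ⊆ 𝔪 ^ a`, and `𝔪 ^ n0 ⊆ I`; by pigeonhole, a product of `μ (q - 1) + 1` of the `μ`
generators of `I` contains some generator at least `q` times, so
`I ^ (μ (q - 1) + 1) ⊆ I^[q]`. Hence `R_a ⊆ I^[q]` once `a ≥ n0 (μ (q - 1) + 1)`, and since
`M_{a+l} = R_a M_l`, the degree-`m` piece of `M / I^[q] M` vanishes for
`m ≥ l + n0 (μ (q - 1) + 1)`, which holds whenever `m ≥ (l + n0 (μ + 1)) q`. Thus every `g_n`
vanishes outside `[-1, l + n0 (μ + 1)]`.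
-/

open Filter Topology

/-- The `q`-th Frobenius power `I^{[q]}` of an ideal. -/
def frobeniusPower {R : Type*} [CommRing R] (I : Ideal R) (q : ℕ) : Ideal R :=
  Ideal.span ((fun x => x ^ q) '' (I : Set R))

/-- `ℓ(M/I^{[q]}M)_m`: the `k`-dimension of the image of the degree-`m` piece `ℳ m`
in `M/I^{[q]}M`. -/
noncomputable def gradedPieceLength {k R M : Type*} [Field k] [CommRing R] [Algebra k R]
    [AddCommGroup M] [Module R M] [Module k M] [IsScalarTower k R M]
    (ℳ : ℕ → Submodule k M) (I : Ideal R) (q m : ℕ) : ℕ :=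
  Module.finrank k
    ((ℳ m).map ((frobeniusPower I q • (⊤ : Submodule R M)).mkQ.restrictScalars k))

/-- The piecewise linear interpolation through the points `(m/q, v m)`, `m ∈ ℤ`. -/
noncomputable def interpolate (v : ℤ → ℝ) (q : ℕ) (x : ℝ) : ℝ :=
  (1 - (x * q - ⌊x * q⌋)) * v ⌊x * q⌋ + (x * q - ⌊x * q⌋) * v (⌊x * q⌋ + 1)

lemma interpolate_one_eqOn_Icc (v : ℤ → ℝ) (c : ℤ) :
    Set.EqOn (interpolate v 1) (fun t => (1 - (t - c)) * v c + (t - c) * v (c + 1))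
      (Set.Icc (c : ℝ) (c + 1)) := by
  rintro t ⟨hct, htc⟩
  simp only [interpolate, Nat.cast_one, mul_one]
  rcases htc.eq_or_lt with rfl | hlt
  · have : ⌊(c : ℝ) + 1⌋ = c + 1 := by exact_mod_cast Int.floor_intCast (c + 1)
    rw [this]; push_cast; ring
  · rw [Int.floor_eq_iff.mpr ⟨hct, hlt⟩]

lemma continuous_interpolate (v : ℤ → ℝ) (q : ℕ) : Continuous (interpolate v q) := by
  have hone : Continuous (interpolate v 1) :=
    (locallyFinite_Icc_of_tendsto tendsto_intCast_atTop_atTop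
        (tendsto_atBot_add_const_right _ 1 (tendsto_intCast_atBot_iff.2 tendsto_id))).continuous
      (iUnion_Icc_intCast ℝ) (fun _ => isClosed_Icc)
      (fun c => (by fun_prop : Continuous _).continuousOn.congr (interpolate_one_eqOn_Icc v c))
  have hscale : interpolate v q = fun x => interpolate v 1 (x * q) := by
    ext x; simp [interpolate]
  rw [hscale]
  fun_prop

lemma support_interpolate_subset {v : ℤ → ℝ} {q : ℕ} (hq : 1 ≤ q) {C : ℝ}
    (hv : ∀ m : ℤ, m < 0 ∨ C * q < m + 1 → v m = 0) :
    Function.support (interpolate v q) ⊆ Set.Icc (-1) C := by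
  refine Function.support_subset_iff'.mpr fun x hx => ?_
  have hq' : (1 : ℝ) ≤ q := by exact_mod_cast hq
  have hfl := Int.floor_le (x * q)
  have hlt := Int.lt_floor_add_one (x * q)
  have hvanish : v ⌊x * q⌋ = 0 ∧ v (⌊x * q⌋ + 1) = 0 := by
    rcases not_and_or.mp hx with hx | hx <;> push Not at hx
    · have : x * q ≤ x := by nlinarith
      have : ⌊x * q⌋ < -1 := by exact_mod_cast (show (⌊x * q⌋ : ℝ) < -1 by linarith)
      exact ⟨hv _ (.inl (by omega)), hv _ (.inl (by omega))⟩
    · have : C * q < x * q := by nlinarith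
      exact ⟨hv _ (.inr (by linarith)), hv _ (.inr (by push_cast; linarith))⟩
  simp [interpolate, hvanish]

lemma span_range_pow_le_frobeniusPower {R ι : Type*} [CommRing R] [Fintype ι] (gens : ι → R)
    (q : ℕ) :
    Ideal.span (Set.range gens) ^ (Fintype.card ι * (q - 1) + 1) ≤
      frobeniusPower (Ideal.span (Set.range gens)) q := by
  classical
  rw [Ideal.span, Submodule.span_pow, Submodule.span_le]
  intro x hx
  obtain ⟨f, rfl⟩ := Set.mem_pow.mp hx
  choose idx hidx using fun j => (f j).2
  obtain ⟨i, hi⟩ := Fintype.exists_lt_card_fiber_of_mul_lt_card (f := idx) (n := q - 1) (by simp)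
  have hi_mem : i ∈ Finset.univ.image idx := by
    obtain ⟨j, hj⟩ := Finset.card_pos.mp (lt_of_le_of_lt (Nat.zero_le _) hi)
    exact Finset.mem_image.mpr ⟨j, Finset.mem_univ j, (Finset.mem_filter.mp hj).2⟩
  have hdvd : gens i ^ q ∣ (List.ofFn fun j => (f j : R)).prod := by
    rw [List.prod_ofFn, ← Finset.prod_congr rfl fun j _ => hidx j, Finset.prod_comp]
    exact (pow_dvd_pow _ (by omega)).trans (Finset.dvd_prod_of_mem _ hi_mem)
  exact Ideal.mem_of_dvd _ hdvd (Ideal.subset_span ⟨gens i, Ideal.subset_span ⟨i, rfl⟩, rfl⟩)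

lemma coe_subset_pow_of_mul_span {k R : Type*} [CommSemiring k] [CommSemiring R] [Algebra k R]
    (𝒜 : ℕ → Submodule k R)
    (hstd : ∀ m : ℕ, (𝒜 (m + 1) : Set R) ⊆
      Submodule.span k (Set.image2 (· * ·) (𝒜 1 : Set R) (𝒜 m : Set R)))
    {J : Ideal R} (hJ : (𝒜 1 : Set R) ⊆ J) (m : ℕ) : (𝒜 m : Set R) ⊆ (J ^ m : Ideal R) := by
  induction m with
  | zero => simp
  | succ m ih =>
    have hspan : Submodule.span k (Set.image2 (· * ·) (𝒜 1 : Set R) (𝒜 m : Set R)) ≤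
        (J ^ (m + 1)).restrictScalars k := by
      rw [Submodule.span_le]
      rintro _ ⟨a, ha, b, hb, rfl⟩
      rw [pow_succ']
      exact Ideal.mul_mem_mul (hJ ha) (ih hb)
    exact fun x hx => hspan (hstd m hx)

lemma gradedPieceLength_eq_zero_of_subset {k R M : Type*} [Field k] [CommRing R] [Algebra k R]
    [AddCommGroup M] [Module R M] [Module k M] [IsScalarTower k R M]
    (ℳ : ℕ → Submodule k M) (I : Ideal R) (q m : ℕ)
    (h : (ℳ m : Set M) ⊆ (frobeniusPower I q • ⊤ : Submodule R M)) :
    gradedPieceLength ℳ I q m = 0 := by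
  have : (ℳ m).map ((frobeniusPower I q • (⊤ : Submodule R M)).mkQ.restrictScalars k) = ⊥ := by
    rw [Submodule.eq_bot_iff]
    rintro _ ⟨x, hx, rfl⟩
    exact (Submodule.Quotient.mk_eq_zero _).mpr (h hx)
  rw [gradedPieceLength, this, finrank_bot]

lemma gradedPieceLength_eq_zero_of_le {k R M : Type*} [Field k] [CommRing R] [Algebra k R]
    [AddCommGroup M] [Module R M] [Module k M] [IsScalarTower k R M]
    (𝒜 : ℕ → Submodule k R)
    (hstd : ∀ m : ℕ, (𝒜 (m + 1) : Set R) ⊆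
      Submodule.span k (Set.image2 (· * ·) (𝒜 1 : Set R) (𝒜 m : Set R)))
    {μ n0 : ℕ} (gens : Fin μ → R)
    (hirr : Ideal.span {x : R | ∃ i > 0, x ∈ 𝒜 i} ^ n0 ≤ Ideal.span (Set.range gens))
    (ℳ : ℕ → Submodule k M) {l : ℕ}
    (hmul : ∀ m : ℕ, (ℳ (m + l) : Set M) ⊆
      Submodule.span k (Set.image2 (· • ·) (𝒜 m : Set R) (ℳ l : Set M)))
    {q m : ℕ} (hm : l + n0 * (μ * (q - 1) + 1) ≤ m) :
    gradedPieceLength ℳ (Ideal.span (Set.range gens)) q m = 0 := by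
  obtain ⟨a, rfl⟩ : ∃ a, m = a + l := ⟨m - l, by omega⟩
  set I := Ideal.span (Set.range gens)
  set 𝔪 := Ideal.span {x : R | ∃ i > 0, x ∈ 𝒜 i}
  have hA : (𝒜 a : Set R) ⊆ frobeniusPower I q := calc
    (𝒜 a : Set R) ⊆ (𝔪 ^ a : Ideal R) :=
        coe_subset_pow_of_mul_span 𝒜 hstd (J := 𝔪)
          (fun x hx => Ideal.subset_span ⟨1, one_pos, hx⟩) a
    _ ⊆ ((𝔪 ^ n0) ^ (μ * (q - 1) + 1) : Ideal R) := by
        rw [← pow_mul]; exact Ideal.pow_le_pow_right (by omega)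
    _ ⊆ (I ^ (μ * (q - 1) + 1) : Ideal R) := Ideal.pow_right_mono hirr _
    _ ⊆ frobeniusPower I q := by
        simpa using span_range_pow_le_frobeniusPower gens q
  have hspan : Submodule.span k (Set.image2 (· • ·) (𝒜 a : Set R) (ℳ l : Set M)) ≤
      (frobeniusPower I q • ⊤ : Submodule R M).restrictScalars k := by
    rw [Submodule.span_le]
    rintro _ ⟨r, hr, x, -, rfl⟩
    show r • x ∈ frobeniusPower I q • (⊤ : Submodule R M)
    exact Submodule.smul_mem_smul (hA hr) Submodule.mem_top
  exact gradedPieceLength_eq_zero_of_subset ℳ I q _ fun x hx => hspan (hmul a hx)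

theorem stmt4_general
    (k : Type*) [Field k] (p : ℕ) (hp : p.Prime)
    (R : Type*) [CommRing R] [Algebra k R]
    (𝒜 : ℕ → Submodule k R)
    (hstd : ∀ m : ℕ, (𝒜 (m + 1) : Set R) ⊆
      Submodule.span k (Set.image2 (· * ·) (𝒜 1 : Set R) (𝒜 m : Set R)))
    (d : ℕ)
    (I : Ideal R)
    (M : Type*) [AddCommGroup M] [Module R M] [Module k M] [IsScalarTower k R M]
    (ℳ : ℕ → Submodule k M)
    (n0 μ l : ℕ)
    (hirr : (Ideal.span {x : R | ∃ i > 0, x ∈ 𝒜 i}) ^ n0 ≤ I)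
    (gens : Fin μ → R)
    (hgen : I = Ideal.span (Set.range gens))
    (hmul : ∀ m : ℕ, (ℳ (m + l) : Set M) ⊆
      Submodule.span k (Set.image2 (· • ·) (𝒜 m : Set R) (ℳ l : Set M)))
    -- the function `g_n`
    (g : ℕ → ℝ → ℝ)
    (hg : ∀ n : ℕ, g n = interpolate
      (fun m : ℤ => if 0 ≤ m then
          (gradedPieceLength ℳ I (p ^ n) m.toNat : ℝ) / (p : ℝ) ^ (n * (d - 1))
        else 0)
      (p ^ n)) :
    (∀ n, Continuous (g n) ∧ HasCompactSupport (g n)) ∧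
      ∃ C : ℝ, ∀ n, Function.support (g n) ⊆ Set.Icc (-1 : ℝ) C := by
  subst hgen
  have hsupp (n : ℕ) :
      Function.support (g n) ⊆ Set.Icc (-1 : ℝ) ((l + n0 * (μ + 1) : ℕ) : ℝ) := by
    obtain ⟨r, hr⟩ : ∃ r, p ^ n = r + 1 :=
      ⟨p ^ n - 1, (Nat.succ_pred_eq_of_pos (pow_pos hp.pos n)).symm⟩
    rw [hg n]
    refine support_interpolate_subset (by omega) fun m hm => ?_
    rcases hm with hneg | hlarge
    · rw [if_neg (not_le.mpr hneg)]
    · have hlarge' : ((l + n0 * (μ + 1)) * p ^ n : ℕ) < m + 1 := by exact_mod_cast hlarge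
      have hbound : l + n0 * (μ * (p ^ n - 1) + 1) ≤ m.toNat := by
        rw [hr] at hlarge' ⊢
        rw [Nat.add_sub_cancel, Int.le_toNat (by nlinarith)]
        push_cast at hlarge' ⊢
        nlinarith
      rw [if_pos (by omega), gradedPieceLength_eq_zero_of_le 𝒜 hstd gens hirr ℳ hmul hbound,
        Nat.cast_zero, zero_div]
  exact ⟨fun n => ⟨hg n ▸ continuous_interpolate _ _,
    HasCompactSupport.intro isCompact_Icc (Function.support_subset_iff'.mp (hsupp n))⟩, _, hsupp⟩

/-- Each interpolated function `g_n` (through the values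
`(1/q^{d-1})·ℓ(M/I^{[q]}M)_m` at the points `m/q`, `q = p^n`, vanishing in negative
degrees) is continuous with compact support, and a single compact interval contains the
supports of all the `g_n`. -/
theorem stmt4
    (k : Type*) [Field k] (p : ℕ) (hp : p.Prime) [CharP k p]
    (R : Type*) [CommRing R] [IsNoetherianRing R] [Algebra k R]
    (𝒜 : ℕ → Submodule k R) [GradedAlgebra 𝒜]
    [∀ m, FiniteDimensional k (𝒜 m)]
    (hstd : ∀ m : ℕ, (𝒜 (m + 1) : Set R) ⊆
      Submodule.span k (Set.image2 (· * ·) (𝒜 1 : Set R) (𝒜 m : Set R)))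
    (d : ℕ) (hd : 2 ≤ d) (hdim : ringKrullDim R = d)
    (I : Ideal R) [Module.Finite k (R ⧸ I)]
    (M : Type*) [AddCommGroup M] [Module R M] [Module k M] [IsScalarTower k R M]
    [Module.Finite R M]
    (ℳ : ℕ → Submodule k M) [SetLike.GradedSMul 𝒜 ℳ] [DirectSum.Decomposition ℳ]
    [∀ m, FiniteDimensional k (ℳ m)]
    (n0 μ l : ℕ) (hn0 : 0 < n0)
    (hirr : (Ideal.span {x : R | ∃ i > 0, x ∈ 𝒜 i}) ^ n0 ≤ I)
    (gens : Fin μ → R) (hhom : ∀ i, SetLike.IsHomogeneousElem 𝒜 (gens i))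
    (hgen : I = Ideal.span (Set.range gens))
    (hmul : ∀ m : ℕ, (ℳ (m + l) : Set M) ⊆
      Submodule.span k (Set.image2 (· • ·) (𝒜 m : Set R) (ℳ l : Set M)))
    -- the function `g_n`
    (g : ℕ → ℝ → ℝ)
    (hg : ∀ n : ℕ, g n = interpolate
      (fun m : ℤ => if 0 ≤ m then
          (gradedPieceLength ℳ I (p ^ n) m.toNat : ℝ) / (p : ℝ) ^ (n * (d - 1))
        else 0)
      (p ^ n)) :
    (∀ n, Continuous (g n) ∧ HasCompactSupport (g n)) ∧
      ∃ C : ℝ, ∀ n, Function.support (g n) ⊆ Set.Icc (-1 : ℝ) C :=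
  stmt4_general k p hp R 𝒜 hstd d I M ℳ n0 μ l hirr gens hgen hmul g hg
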